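/- arXiv:1807.02236 — 2 statements merged into one kernel-verified Lean document; each statement's English description precedes it below -/
import Mathlib

section
/- Let {x_1,…,x_d} and {z_1,…,z_d} be two orthonormal bases of ℂ^d with overlapping matrix U and coefficients s_1,…,s_d. Then for every density matrix ρ on ℂ^d, every k ∈ {1,…,d}, and all subsets I, J ⊆ {1,…,d} with |I| + |J| = k + 1, one has Σ_{i∈I} ⟨x_i, ρ x_i⟩ + Σ_{j∈J} ⟨z_j, ρ z_j⟩ ≤ 1 + s_k. -/
open Matrix
open scoped Kronecker ComplexOrder

noncomputable section

/-- Sum of the `k` largest entries of `v` (zero-padding implicit for nonneg vectors):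
the maximum of `∑ i ∈ s, v i` over subsets `s` of cardinality at most `k`. -/
def topSum {ι : Type*} [Fintype ι] (v : ι → ℝ) (k : ℕ) : ℝ :=
  (Finset.univ.powerset.filter fun s => s.card ≤ k).sup' ⟨∅, by simp⟩ fun s => ∑ i ∈ s, v i

/-- `v ≺ w` (majorization, with implicit zero padding): every partial sum of the `k` largest
entries of `v` is at most that of `w`, and the total sums are equal. -/
def Majorizes {ι κ : Type*} [Fintype ι] [Fintype κ] (v : ι → ℝ) (w : κ → ℝ) : Prop :=
  (∀ k : ℕ, topSum v k ≤ topSum w k) ∧ (∑ i, v i = ∑ j, w j)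

/-- The operator norm (largest singular value) of a complex matrix. -/
def opNorm {m n : Type*} [Fintype m] [Fintype n] [DecidableEq n] (M : Matrix m n ℂ) : ℝ :=
  ‖LinearMap.toContinuousLinearMap (Matrix.toEuclideanLin M)‖

/-- `sCoef U k = s_k`: the maximum operator norm over all submatrices of `U` of class `k`,
i.e. obtained by selecting nonempty row/column sets `R`, `C` with `|R| + |C| = k + 1`. -/
def sCoef {d : ℕ} (U : Matrix (Fin d) (Fin d) ℂ) (k : ℕ) : ℝ :=
  sSup { r : ℝ | ∃ R C : Finset (Fin d), R.Nonempty ∧ C.Nonempty ∧ R.card + C.card = k + 1 ∧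
    r = opNorm (U.submatrix (fun i : {i // i ∈ R} => (i : Fin d))
                            (fun j : {j // j ∈ C} => (j : Fin d))) }

/-- The bound vector `ω^{X⊕Z} = (1, s_1, s_2 - s_1, …, s_d - s_{d-1}, 0, …, 0) ∈ ℝ^{2d}`.
(Note `sCoef U 0 = sSup ∅ = 0`, so the entry at index `1` is `s_1`.) -/
def omegaDS {d : ℕ} (U : Matrix (Fin d) (Fin d) ℂ) : Fin (2 * d) → ℝ := fun i =>
  if (i : ℕ) = 0 then 1
  else if (i : ℕ) ≤ d then sCoef U (i : ℕ) - sCoef U ((i : ℕ) - 1)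
  else 0

/-- A density matrix: positive semidefinite with unit trace. -/
def IsDensityMatrix {n : Type*} [Fintype n] (ρ : Matrix n n ℂ) : Prop :=
  ρ.PosSemidef ∧ ρ.trace = 1

/-- A family of vectors forming an orthonormal basis of `ℂ^d` (w.r.t. `⟨u, v⟩ = star u ⬝ᵥ v`). -/
def OrthonormalBasisVecs {d : ℕ} (x : Fin d → Fin d → ℂ) : Prop :=
  ∀ i j, star (x i) ⬝ᵥ x j = if i = j then 1 else 0

/-- Measurement distribution of a density matrix `ρ` in the basis `x`: `p i = ⟨x i, ρ (x i)⟩`. -/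
def measDist {d : ℕ} (x : Fin d → Fin d → ℂ) (ρ : Matrix (Fin d) (Fin d) ℂ) : Fin d → ℝ :=
  fun i => (star (x i) ⬝ᵥ (ρ *ᵥ x i)).re

/-- The tensor product of vectors. -/
def tensorVec {dA dB : ℕ} (u : Fin dA → ℂ) (v : Fin dB → ℂ) : Fin dA × Fin dB → ℂ :=
  fun ab => u ab.1 * v ab.2

/-- Joint measurement distribution of a bipartite density matrix `ρ` in the product basis
`{xA i ⊗ xB j}`: `p (i,j) = ⟨xA i ⊗ xB j, ρ (xA i ⊗ xB j)⟩`. -/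
def jointDist {dA dB : ℕ} (xA : Fin dA → Fin dA → ℂ) (xB : Fin dB → Fin dB → ℂ)
    (ρ : Matrix (Fin dA × Fin dB) (Fin dA × Fin dB) ℂ) : Fin dA × Fin dB → ℝ :=
  fun ij => (star (tensorVec (xA ij.1) (xB ij.2)) ⬝ᵥ (ρ *ᵥ tensorVec (xA ij.1) (xB ij.2))).re

open scoped Classical in
/-- The finite set of distinct values of the products `α i * β j`. -/
def valueSet {dA dB : ℕ} (α : Fin dA → ℝ) (β : Fin dB → ℝ) : Finset ℝ :=
  Finset.image (fun ij : Fin dA × Fin dB => α ij.1 * β ij.2) Finset.univ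

open scoped Classical in
/-- The grouped distribution of a joint distribution `p`, indexed by the distinct values `l`
of the products `α i * β j`, with entries `∑_{(i,j) : α i * β j = l} p (i,j)`. -/
def groupedDist {dA dB : ℕ} (α : Fin dA → ℝ) (β : Fin dB → ℝ)
    (p : Fin dA × Fin dB → ℝ) : valueSet α β → ℝ :=
  fun l => ∑ ij ∈ Finset.univ.filter (fun ij : Fin dA × Fin dB => α ij.1 * β ij.2 = (l : ℝ)), p ij

/-- Separability: `ρ` is a finite convex combination of tensor products of density matrices. -/
def IsSeparableState {dA dB : ℕ} (ρ : Matrix (Fin dA × Fin dB) (Fin dA × Fin dB) ℂ) : Prop :=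
  ∃ (K : ℕ) (lam : Fin K → ℝ) (σ : Fin K → Matrix (Fin dA) (Fin dA) ℂ)
    (τ : Fin K → Matrix (Fin dB) (Fin dB) ℂ),
    (∀ k, 0 ≤ lam k) ∧ (∑ k, lam k = 1) ∧
    (∀ k, IsDensityMatrix (σ k)) ∧ (∀ k, IsDensityMatrix (τ k)) ∧
    ρ = ∑ k, (lam k : ℂ) • (σ k ⊗ₖ τ k)

/-!
Write `ρ = ∑ₘ wₘ wₘᴴ` as a sum of rank-one positive matrices; it then suffices to show
`∑_{i∈I} |⟨xᵢ, v⟩|² + ∑_{j∈J} |⟨zⱼ, v⟩|² ≤ (1 + ‖U_{IJ}‖) ‖v‖²` for every vector `v`, and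
`‖U_{IJ}‖ ≤ s_k`. Let `a`, `b` be the orthogonal projections of `v` onto the spans of
`{xᵢ}_{i∈I}` and `{zⱼ}_{j∈J}`. The left-hand side is
`t = ‖a‖² + ‖b‖² = re ⟨v, a + b⟩ ≤ ‖v‖ ‖a + b‖`, and
`‖a + b‖² = t + 2 re ⟨a, b⟩ ≤ (1 + ‖U_{IJ}‖) t`,
because `⟨a, b⟩ = αᴴ U_{IJ} β` for the coefficient vectors `α`, `β` of `a`, `b`, whose norms are
`‖a‖`, `‖b‖`. Hence `t ≤ (1 + ‖U_{IJ}‖) ‖v‖²`.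
-/

open scoped InnerProductSpace

section InnerProductSpace

variable {𝕜 E ι κ : Type*} [RCLike 𝕜] [NormedAddCommGroup E] [InnerProductSpace 𝕜 E]

theorem norm_sq_add_norm_sq_le_of_re_inner_eq {a b v : E} {c : ℝ} (hc : 0 ≤ c)
    (ha : RCLike.re ⟪v, a⟫_𝕜 = ‖a‖ ^ 2) (hb : RCLike.re ⟪v, b⟫_𝕜 = ‖b‖ ^ 2)
    (hab : ‖⟪a, b⟫_𝕜‖ ≤ c * (‖a‖ * ‖b‖)) :
    ‖a‖ ^ 2 + ‖b‖ ^ 2 ≤ (1 + c) * ‖v‖ ^ 2 := by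
  set t := ‖a‖ ^ 2 + ‖b‖ ^ 2
  have ht : t ≤ ‖v‖ * ‖a + b‖ :=
    calc t = RCLike.re ⟪v, a + b⟫_𝕜 := by rw [inner_add_right, map_add, ha, hb]
      _ ≤ ‖⟪v, a + b⟫_𝕜‖ := RCLike.re_le_norm _
      _ ≤ ‖v‖ * ‖a + b‖ := norm_inner_le_norm _ _
  have hnorm_add : ‖a + b‖ ^ 2 ≤ (1 + c) * t := by
    rw [@norm_add_sq 𝕜]
    nlinarith [(RCLike.re_le_norm ⟪a, b⟫_𝕜).trans hab, sq_nonneg (‖a‖ - ‖b‖)]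
  rcases (show 0 ≤ t by positivity).eq_or_lt with ht0 | ht0
  · rw [← ht0]; positivity
  · refine le_of_mul_le_mul_left ?_ ht0
    nlinarith [pow_le_pow_left₀ ht0.le ht 2, mul_le_mul_of_nonneg_left hnorm_add (sq_nonneg ‖v‖)]

theorem re_inner_sum_inner_smul [Fintype ι] (e : ι → E) (v : E) :
    RCLike.re ⟪v, ∑ i, ⟪e i, v⟫_𝕜 • e i⟫_𝕜 = ∑ i, ‖⟪e i, v⟫_𝕜‖ ^ 2 := by
  simp only [inner_sum, inner_smul_right, map_sum]
  refine Finset.sum_congr rfl fun i _ => ?_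
  rw [← inner_conj_symm (e i) v, RCLike.conj_mul, RCLike.norm_conj]
  norm_cast

theorem Orthonormal.norm_sum_smul [Fintype ι] {e : ι → E} (he : Orthonormal 𝕜 e)
    (α : EuclideanSpace 𝕜 ι) : ‖∑ i, α i • e i‖ = ‖α‖ := by
  refine (sq_eq_sq₀ (norm_nonneg _) (norm_nonneg _)).mp ?_
  rw [EuclideanSpace.norm_sq_eq, ← inner_self_eq_norm_sq (𝕜 := 𝕜), he.inner_sum]
  simp [RCLike.conj_mul]

theorem inner_sum_smul_sum_smul [Fintype ι] [Fintype κ] (e : ι → E) (f : κ → E)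
    (α : ι → 𝕜) (β : κ → 𝕜) :
    ⟪∑ i, α i • e i, ∑ j, β j • f j⟫_𝕜 =
      star α ⬝ᵥ (Matrix.of (fun i j => ⟪e i, f j⟫_𝕜) *ᵥ β) := by
  simp only [sum_inner, inner_sum, inner_smul_left, inner_smul_right, dotProduct, mulVec,
    Matrix.of_apply, Pi.star_apply, RCLike.star_def, Finset.mul_sum]
  rw [Finset.sum_comm]
  exact Finset.sum_congr rfl fun i _ => Finset.sum_congr rfl fun j _ => by ring

end InnerProductSpace

theorem norm_star_dotProduct_mulVec_le {m n : Type*} [Fintype m] [Fintype n] [DecidableEq n]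
    (M : Matrix m n ℂ) (α : EuclideanSpace ℂ m) (β : EuclideanSpace ℂ n) :
    ‖star α.ofLp ⬝ᵥ (M *ᵥ β.ofLp)‖ ≤ opNorm M * (‖α‖ * ‖β‖) := by
  have h : star α.ofLp ⬝ᵥ (M *ᵥ β.ofLp) =
      ⟪α, LinearMap.toContinuousLinearMap (Matrix.toEuclideanLin M) β⟫_ℂ := by
    rw [EuclideanSpace.inner_eq_star_dotProduct, dotProduct_comm]; rfl
  rw [h]
  calc _ ≤ ‖α‖ * ‖LinearMap.toContinuousLinearMap (Matrix.toEuclideanLin M) β‖ :=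
        norm_inner_le_norm _ _
    _ ≤ ‖α‖ * (opNorm M * ‖β‖) := by gcongr; exact ContinuousLinearMap.le_opNorm _ _
    _ = _ := by ring

section Pair

variable {E ι κ : Type*} [NormedAddCommGroup E] [InnerProductSpace ℂ E]
  [Fintype ι] [Fintype κ] [DecidableEq κ]

theorem Orthonormal.sum_norm_inner_sq_add_sum_norm_inner_sq_le {e : ι → E} {f : κ → E}
    (he : Orthonormal ℂ e) (hf : Orthonormal ℂ f) (v : E) :
    ∑ i, ‖⟪e i, v⟫_ℂ‖ ^ 2 + ∑ j, ‖⟪f j, v⟫_ℂ‖ ^ 2 ≤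
      (1 + opNorm (Matrix.of fun i j => ⟪e i, f j⟫_ℂ)) * ‖v‖ ^ 2 := by
  set α : EuclideanSpace ℂ ι := WithLp.toLp 2 fun i => ⟪e i, v⟫_ℂ
  set β : EuclideanSpace ℂ κ := WithLp.toLp 2 fun j => ⟪f j, v⟫_ℂ
  have ha : ‖∑ i, α i • e i‖ ^ 2 = ∑ i, ‖⟪e i, v⟫_ℂ‖ ^ 2 := by
    rw [he.norm_sum_smul, EuclideanSpace.norm_sq_eq]
  have hb : ‖∑ j, β j • f j‖ ^ 2 = ∑ j, ‖⟪f j, v⟫_ℂ‖ ^ 2 := by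
    rw [hf.norm_sum_smul, EuclideanSpace.norm_sq_eq]
  rw [← ha, ← hb]
  refine norm_sq_add_norm_sq_le_of_re_inner_eq (𝕜 := ℂ) (norm_nonneg _) ?_ ?_ ?_
  · rw [ha]; exact re_inner_sum_inner_smul e v
  · rw [hb]; exact re_inner_sum_inner_smul f v
  · rw [inner_sum_smul_sum_smul, he.norm_sum_smul, hf.norm_sum_smul]
    exact norm_star_dotProduct_mulVec_le _ α β

end Pair

theorem Matrix.PosSemidef.sum_re_dotProduct_mulVec_le {𝕜 n ι : Type*} [RCLike 𝕜] [Fintype n]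
    {ρ : Matrix n n 𝕜} (hρ : ρ.PosSemidef) (S : Finset ι) (y : ι → n → 𝕜) {C : ℝ}
    (h : ∀ v, ∑ a ∈ S, ‖star (y a) ⬝ᵥ v‖ ^ 2 ≤ C * ‖WithLp.toLp 2 v‖ ^ 2) :
    ∑ a ∈ S, RCLike.re (star (y a) ⬝ᵥ (ρ *ᵥ y a)) ≤ C * RCLike.re ρ.trace := by
  obtain ⟨m, w, rfl⟩ := Matrix.posSemidef_iff_eq_sum_vecMulVec.mp hρ
  have hform : ∀ u, RCLike.re (star u ⬝ᵥ ((∑ k, vecMulVec (w k) (star (w k))) *ᵥ u)) =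
      ∑ k, ‖star u ⬝ᵥ w k‖ ^ 2 := by
    intro u
    simp only [Matrix.sum_mulVec, dotProduct_sum, vecMulVec_mulVec, map_sum]
    refine Finset.sum_congr rfl fun k _ => ?_
    rw [op_smul_eq_smul, dotProduct_smul, smul_eq_mul, star_dotProduct, RCLike.star_def,
      RCLike.conj_mul (star u ⬝ᵥ w k)]
    norm_cast
  have htrace : RCLike.re (∑ k, vecMulVec (w k) (star (w k))).trace =
      ∑ k, ‖WithLp.toLp 2 (w k)‖ ^ 2 := by
    simp only [trace_sum, trace_vecMulVec, map_sum]
    refine Finset.sum_congr rfl fun k _ => ?_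
    rw [← inner_self_eq_norm_sq (𝕜 := 𝕜), EuclideanSpace.inner_toLp_toLp]
  calc ∑ a ∈ S, RCLike.re (star (y a) ⬝ᵥ ((∑ k, vecMulVec (w k) (star (w k))) *ᵥ y a))
      = ∑ k, ∑ a ∈ S, ‖star (y a) ⬝ᵥ w k‖ ^ 2 := by
        simp only [hform]; exact Finset.sum_comm
    _ ≤ ∑ k, C * ‖WithLp.toLp 2 (w k)‖ ^ 2 := Finset.sum_le_sum fun k _ => h (w k)
    _ = _ := by rw [htrace, Finset.mul_sum]

theorem opNorm_zero {m n : Type*} [Fintype m] [Fintype n] [DecidableEq n] :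
    opNorm (0 : Matrix m n ℂ) = 0 := by
  simp [opNorm]

theorem sCoef_nonneg {d : ℕ} (U : Matrix (Fin d) (Fin d) ℂ) (k : ℕ) : 0 ≤ sCoef U k :=
  Real.sSup_nonneg fun _ ⟨_, _, _, _, _, hr⟩ => hr ▸ norm_nonneg _

theorem opNorm_submatrix_le_sCoef {d : ℕ} (U : Matrix (Fin d) (Fin d) ℂ) {k : ℕ}
    {R C : Finset (Fin d)} (hRC : R.card + C.card = k + 1) :
    opNorm (U.submatrix (fun i : {i // i ∈ R} => (i : Fin d))
      (fun j : {j // j ∈ C} => (j : Fin d))) ≤ sCoef U k := by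
  by_cases hne : R.Nonempty ∧ C.Nonempty
  · refine le_csSup ?_ ⟨R, C, hne.1, hne.2, hRC, rfl⟩
    refine (Set.finite_range fun RC : Finset (Fin d) × Finset (Fin d) =>
      opNorm (U.submatrix (fun i : {i // i ∈ RC.1} => (i : Fin d))
        (fun j : {j // j ∈ RC.2} => (j : Fin d)))).bddAbove.mono ?_
    rintro _ ⟨R', C', -, -, -, rfl⟩
    exact ⟨(R', C'), rfl⟩
  · rw [not_and_or, Finset.not_nonempty_iff_eq_empty, Finset.not_nonempty_iff_eq_empty] at hne
    obtain rfl | rfl := hne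
    all_goals rw [Subsingleton.elim (U.submatrix _ _) 0, opNorm_zero]; exact sCoef_nonneg U k

namespace OrthonormalBasisVecs

variable {d : ℕ} {x z : Fin d → Fin d → ℂ}

theorem orthonormal (hx : OrthonormalBasisVecs x) :
    Orthonormal ℂ fun i => WithLp.toLp 2 (x i) := by
  rw [orthonormal_iff_ite]
  intro i j
  rw [EuclideanSpace.inner_toLp_toLp, dotProduct_comm, hx i j]

theorem sum_norm_dotProduct_sq_add_le (hx : OrthonormalBasisVecs x)
    (hz : OrthonormalBasisVecs z) {U : Matrix (Fin d) (Fin d) ℂ}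
    (hU : ∀ i j, U i j = star (x i) ⬝ᵥ z j) (I J : Finset (Fin d)) (v : Fin d → ℂ) :
    ∑ i ∈ I, ‖star (x i) ⬝ᵥ v‖ ^ 2 + ∑ j ∈ J, ‖star (z j) ⬝ᵥ v‖ ^ 2 ≤
      (1 + opNorm (U.submatrix (fun i : {i // i ∈ I} => (i : Fin d))
        (fun j : {j // j ∈ J} => (j : Fin d)))) * ‖WithLp.toLp 2 v‖ ^ 2 := by
  have h := (hx.orthonormal.comp (Subtype.val : I → Fin d) Subtype.val_injective
    ).sum_norm_inner_sq_add_sum_norm_inner_sq_le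
    (hz.orthonormal.comp (Subtype.val : J → Fin d) Subtype.val_injective) (WithLp.toLp 2 v)
  simp only [Function.comp_apply, EuclideanSpace.inner_toLp_toLp, dotProduct_comm v] at h
  have hG : (Matrix.of fun (i : I) (j : J) => z j ⬝ᵥ star (x i)) =
      U.submatrix Subtype.val Subtype.val := by
    ext i j
    simp [hU, dotProduct_comm]
  rw [hG] at h
  rwa [Finset.sum_coe_sort I (fun i => ‖star (x i) ⬝ᵥ v‖ ^ 2),
    Finset.sum_coe_sort J (fun j => ‖star (z j) ⬝ᵥ v‖ ^ 2)] at h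

end OrthonormalBasisVecs

theorem direct_sum_scalar_uncertainty_general {d : ℕ} (x z : Fin d → Fin d → ℂ)
    (hx : OrthonormalBasisVecs x) (hz : OrthonormalBasisVecs z)
    (U : Matrix (Fin d) (Fin d) ℂ) (hU : ∀ i j, U i j = star (x i) ⬝ᵥ z j)
    (ρ : Matrix (Fin d) (Fin d) ℂ) (hρ : IsDensityMatrix ρ)
    (k : ℕ)
    (I J : Finset (Fin d)) (hIJ : I.card + J.card = k + 1) :
    ∑ i ∈ I, (star (x i) ⬝ᵥ (ρ *ᵥ x i)).re + ∑ j ∈ J, (star (z j) ⬝ᵥ (ρ *ᵥ z j)).re ≤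
      1 + sCoef U k := by
  have hbound (v : Fin d → ℂ) :
      ∑ a ∈ I.disjSum J, ‖star (Sum.elim x z a) ⬝ᵥ v‖ ^ 2 ≤
        (1 + sCoef U k) * ‖WithLp.toLp 2 v‖ ^ 2 := by
    rw [Finset.sum_disjSum]
    refine (hx.sum_norm_dotProduct_sq_add_le hz hU I J v).trans ?_
    gcongr
    exact opNorm_submatrix_le_sCoef U hIJ
  simpa [Finset.sum_disjSum, hρ.2] using hρ.1.sum_re_dotProduct_mulVec_le _ _ hbound

/-- for any density matrix `ρ`, any `k ∈ {1,…,d}`, and subsets `I`, `J` with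
`|I| + |J| = k + 1`, the measurement probabilities satisfy
`∑_{i∈I} ⟨x i, ρ x i⟩ + ∑_{j∈J} ⟨z j, ρ z j⟩ ≤ 1 + s_k`. -/
theorem direct_sum_scalar_uncertainty {d : ℕ} (x z : Fin d → Fin d → ℂ)
    (hx : OrthonormalBasisVecs x) (hz : OrthonormalBasisVecs z)
    (U : Matrix (Fin d) (Fin d) ℂ) (hU : ∀ i j, U i j = star (x i) ⬝ᵥ z j)
    (ρ : Matrix (Fin d) (Fin d) ℂ) (hρ : IsDensityMatrix ρ)
    (k : ℕ) (hk1 : 1 ≤ k) (hkd : k ≤ d)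
    (I J : Finset (Fin d)) (hIJ : I.card + J.card = k + 1) :
    ∑ i ∈ I, (star (x i) ⬝ᵥ (ρ *ᵥ x i)).re + ∑ j ∈ J, (star (z j) ⬝ᵥ (ρ *ᵥ z j)).re ≤
      1 + sCoef U k :=
  direct_sum_scalar_uncertainty_general x z hx hz U hU ρ hρ k I J hIJ

end
end

section
/- Let p ∈ ℝ^{d_A} and q ∈ ℝ^{d_B} be probability vectors (nonnegative entries summing to 1). Then the d_A·d_B-dimensional vector with entries p_i q_j (indexed by pairs (i,j)) is majorized by p and is also majorized by q. -/
open Matrix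
open scoped Kronecker ComplexOrder

noncomputable section

/-! Any `k` entries `p i * q j` of the product have their first coordinates in a set `t` of at
most `k` indices, and since `q` is a probability vector they sum to at most `∑ i ∈ t, p i`.
Majorization by `q` is the same statement with the factors swapped. -/

section Majorization

variable {ι κ : Type*} [Fintype ι] [Fintype κ]

theorem sum_le_topSum (v : ι → ℝ) {k : ℕ} {s : Finset ι} (hs : s.card ≤ k) :
    ∑ i ∈ s, v i ≤ topSum v k :=
  Finset.le_sup' (fun s => ∑ i ∈ s, v i) (by simpa using hs)

theorem topSum_le {v : ι → ℝ} {k : ℕ} {c : ℝ}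
    (h : ∀ s : Finset ι, s.card ≤ k → ∑ i ∈ s, v i ≤ c) : topSum v k ≤ c :=
  Finset.sup'_le _ _ fun s hs => h s (Finset.mem_filter.1 hs).2

theorem topSum_comp_equiv_le (v : κ → ℝ) (e : ι ≃ κ) (k : ℕ) :
    topSum (v ∘ e) k ≤ topSum v k :=
  topSum_le fun s hs => by
    simpa [Finset.sum_map] using sum_le_topSum v ((s.card_map e.toEmbedding).trans_le hs)

theorem topSum_comp_equiv (v : κ → ℝ) (e : ι ≃ κ) (k : ℕ) :
    topSum (v ∘ e) k = topSum v k := by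
  refine (topSum_comp_equiv_le v e k).antisymm ?_
  simpa [Function.comp_def] using topSum_comp_equiv_le (v ∘ e) e.symm k

theorem Majorizes.comp_equiv {μ : Type*} [Fintype μ] {v : κ → ℝ} {w : μ → ℝ}
    (h : Majorizes v w) (e : ι ≃ κ) : Majorizes (v ∘ e) w :=
  ⟨fun k => (topSum_comp_equiv v e k).trans_le (h.1 k), (e.sum_comp v).trans h.2⟩

theorem majorizes_fst_of_sum_eq_one [DecidableEq ι] {p : ι → ℝ} {q : κ → ℝ}
    (hp : ∀ i, 0 ≤ p i) (hq : ∀ j, 0 ≤ q j) (hqs : ∑ j, q j = 1) :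
    Majorizes (fun ij : ι × κ => p ij.1 * q ij.2) p := by
  refine ⟨fun k => topSum_le fun s hs => ?_, ?_⟩
  · calc ∑ ij ∈ s, p ij.1 * q ij.2
        ≤ ∑ ij ∈ s.image Prod.fst ×ˢ Finset.univ, p ij.1 * q ij.2 :=
          Finset.sum_le_sum_of_subset_of_nonneg
            (fun ij hij =>
              Finset.mem_product.2 ⟨Finset.mem_image_of_mem _ hij, Finset.mem_univ _⟩)
            (fun ij _ _ => mul_nonneg (hp ij.1) (hq ij.2))
      _ = ∑ i ∈ s.image Prod.fst, p i := by simp [Finset.sum_product, ← Finset.mul_sum, hqs]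
      _ ≤ topSum p k := sum_le_topSum p (Finset.card_image_le.trans hs)
  · simp [Fintype.sum_prod_type, ← Finset.mul_sum, hqs]

end Majorization

/-- the product distribution `(p_i q_j)` is majorized by `p` and also by `q`. -/
theorem product_distribution_majorized {dA dB : ℕ} (p : Fin dA → ℝ) (q : Fin dB → ℝ)
    (hp : ∀ i, 0 ≤ p i) (hq : ∀ j, 0 ≤ q j)
    (hps : ∑ i, p i = 1) (hqs : ∑ j, q j = 1) :
    Majorizes (fun ij : Fin dA × Fin dB => p ij.1 * q ij.2) p ∧
    Majorizes (fun ij : Fin dA × Fin dB => p ij.1 * q ij.2) q := by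
  refine ⟨majorizes_fst_of_sum_eq_one hp hq hqs, ?_⟩
  have hswap :=
    (majorizes_fst_of_sum_eq_one hq hp hps).comp_equiv (Equiv.prodComm (Fin dA) (Fin dB))
  convert hswap using 2 with ij
  exact mul_comm _ _

end
end
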